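/- arXiv:1504.03561 — 7 statements merged into one kernel-verified Lean document; each statement's English description precedes it below -/
import Mathlib

section
/- Let ∼ be an equivalence relation on U and let c = (T, Θ) be a constraint that is class-independent for ∼. If π and π₀ are plans such that for all s, s' ∈ S, π(s) ∼ π(s') if and only if π₀(s) ∼ π₀(s'), then π|_T ∈ Θ if and only if π₀|_T ∈ Θ. -/
/-- For a constraint `(T, Θ)` that is class-independent for `∼`, two plans with the same
CI-pattern are either both satisfying or both violating. -/
theorem stmt_3 {S U : Type*} [Fintype S] [Fintype U]
    (sim : Setoid U)
    (T : Set S) (Θ : Set (T → U))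
    (hCI₁ : ∀ θ : T → U,
      (Quotient.mk sim ∘ θ) ∈ (fun θ' : T → U => Quotient.mk sim ∘ θ') '' Θ → θ ∈ Θ)
    (hCI₂ : ∀ φ : Equiv.Perm (Quotient sim), ∀ θ : T → U,
      (Quotient.mk sim ∘ θ) ∈ (fun θ' : T → U => Quotient.mk sim ∘ θ') '' Θ →
      (⇑φ ∘ (Quotient.mk sim ∘ θ)) ∈ (fun θ' : T → U => Quotient.mk sim ∘ θ') '' Θ)
    (π π₀ : S → U)
    (hpat : ∀ s s' : S, sim.r (π s) (π s') ↔ sim.r (π₀ s) (π₀ s')) :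
    (fun t : T => π t) ∈ Θ ↔ (fun t : T => π₀ t) ∈ Θ := by
  classical
  suffices h : ∀ p q : S → U,
      (∀ s s' : S, sim.r (p s) (p s') ↔ sim.r (q s) (q s')) →
      (fun t : T => p t) ∈ Θ → (fun t : T => q t) ∈ Θ by
    exact ⟨h π π₀ hpat, h π₀ π fun s s' => (hpat s s').symm⟩
  intro p q hpq hp
  set f : S → Quotient sim := fun s => Quotient.mk sim (p s) with hf
  set g : S → Quotient sim := fun s => Quotient.mk sim (q s) with hg
  have key : ∀ s s', f s = f s' ↔ g s = g s' := by
    intro s s'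
    constructor
    · intro h'
      exact Quotient.sound ((hpq s s').1 (Quotient.exact h'))
    · intro h'
      exact Quotient.sound ((hpq s s').2 (Quotient.exact h'))
  let e : {x : Quotient sim // x ∈ Set.range f} ≃ {x : Quotient sim // x ∈ Set.range g} :=
    { toFun := fun x => ⟨g x.2.choose, ⟨x.2.choose, rfl⟩⟩
      invFun := fun y => ⟨f y.2.choose, ⟨y.2.choose, rfl⟩⟩
      left_inv := by
        rintro ⟨x, hx⟩
        apply Subtype.ext
        have h1 : f hx.choose = x := hx.choose_spec
        have h2 : g (⟨hx.choose, rfl⟩ : (∃ s, g s = g hx.choose)).choose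
            = g hx.choose := (⟨hx.choose, rfl⟩ : (∃ s, g s = g hx.choose)).choose_spec
        have := (key _ _).2 h2
        simpa [h1] using this
      right_inv := by
        rintro ⟨y, hy⟩
        apply Subtype.ext
        have h1 : g hy.choose = y := hy.choose_spec
        have h2 : f (⟨hy.choose, rfl⟩ : (∃ s, f s = f hy.choose)).choose
            = f hy.choose := (⟨hy.choose, rfl⟩ : (∃ s, f s = f hy.choose)).choose_spec
        have := (key _ _).1 h2
        simpa [h1] using this }
  let φ : Equiv.Perm (Quotient sim) := e.extendSubtype
  have hφ : ∀ s : S, φ (f s) = g s := by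
    intro s
    have hmem : f s ∈ Set.range f := ⟨s, rfl⟩
    have h1 : φ (f s) = (e ⟨f s, hmem⟩ : {x : Quotient sim // x ∈ Set.range g}).1 :=
      e.extendSubtype_apply_of_mem (f s) hmem
    rw [h1]
    show g hmem.choose = g s
    exact (key _ _).1 hmem.choose_spec
  have hin : (Quotient.mk sim ∘ fun t : T => p t)
      ∈ (fun θ' : T → U => Quotient.mk sim ∘ θ') '' Θ := ⟨_, hp, rfl⟩
  have h2 := hCI₂ φ (fun t : T => p t) hin
  have heq : (⇑φ ∘ (Quotient.mk sim ∘ fun t : T => p t))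
      = (Quotient.mk sim ∘ fun t : T => q t) := by
    funext t
    exact hφ t
  rw [heq] at h2
  exact hCI₁ _ h2
end

section
/- If a (UI, CI)-pattern p = (p₌, p₋) is realizable (there is an authorized plan π having p as its (UI, CI)-pattern), then the top-level bipartite graph G_p has a matching covering the partite set 𝒯 of equivalence classes of steps induced by p₋. -/
/-- If a (UI, CI)-pattern is realizable, the top-level bipartite graph has a matching covering
the classes 𝒯 induced by the CI-pattern: there is an assignment `f` of a user-class to each
CI-label, injective on the labels used, such that each `(T_r, f r)` is an edge (i.e. admits an
authorized partial plan with the right UI-pattern). -/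
theorem stmt_8 {U : Type*} [Fintype U] (k : ℕ) (sim : Setoid U)
    (A : U → Set (Fin k)) (x y : Fin k → Fin k)
    (hreal : ∃ π : Fin k → U,
      (∀ i, i ∈ A (π i)) ∧
      (∀ i j, x i = x j ↔ π i = π j) ∧
      (∀ i j, y i = y j ↔ sim.r (π i) (π j))) :
    ∃ f : Fin k → Quotient sim,
      Set.InjOn f (Set.range y) ∧
      ∀ r ∈ Set.range y, ∃ πr : Fin k → U,
        (∀ i, y i = r → Quotient.mk sim (πr i) = f r ∧ i ∈ A (πr i)) ∧
        (∀ i j, y i = r → y j = r → (πr i = πr j ↔ x i = x j)) := by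
  obtain ⟨π, hA, hx, hy⟩ := hreal
  rcases Nat.eq_zero_or_pos k with rfl | hk
  · exact ⟨fun r => r.elim0, fun r hr => r.elim0, fun r hr => r.elim0⟩
  haveI : Nonempty (Fin k) := ⟨⟨0, hk⟩⟩
  refine ⟨fun r => Quotient.mk sim (π (Function.invFun y r)), ?_, ?_⟩
  · rintro r ⟨i, rfl⟩ s ⟨j, rfl⟩ h
    have hi : y (Function.invFun y (y i)) = y i := Function.invFun_eq ⟨i, rfl⟩
    have hj : y (Function.invFun y (y j)) = y j := Function.invFun_eq ⟨j, rfl⟩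
    have := Quotient.exact h
    have h1 : y (Function.invFun y (y i)) = y (Function.invFun y (y j)) :=
      (hy _ _).mpr this
    rw [hi, hj] at h1
    exact h1
  · rintro r ⟨j, rfl⟩
    refine ⟨π, ?_, fun i j' _ _ => (hx i j').symm⟩
    intro i hi
    have hinv : y (Function.invFun y (y j)) = y j := Function.invFun_eq ⟨j, rfl⟩
    refine ⟨Quotient.sound ?_, hA i⟩
    exact (hy _ _).mp (hi.trans hinv.symm)
end

section
/- Let p = (p₌, p₋) be a consistent (UI, CI)-pattern such that the top-level bipartite graph G_p has a matching covering 𝒯. Then p is realizable: there exists an authorized plan π : S → U such that p₌ is a UI-pattern for π and p₋ is a CI-pattern for π. -/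
/-- If a consistent (UI, CI)-pattern is such that the top-level bipartite graph has a matching
covering 𝒯, then the pattern is realizable. -/
theorem stmt_9 {U : Type*} [Fintype U] (k : ℕ) (sim : Setoid U)
    (A : U → Set (Fin k)) (x y : Fin k → Fin k)
    (hcons : ∀ i j, x i = x j → y i = y j)
    (hmatch : ∃ f : Fin k → Quotient sim,
      Set.InjOn f (Set.range y) ∧
      ∀ r ∈ Set.range y, ∃ πr : Fin k → U,
        (∀ i, y i = r → Quotient.mk sim (πr i) = f r ∧ i ∈ A (πr i)) ∧
        (∀ i j, y i = r → y j = r → (πr i = πr j ↔ x i = x j))) :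
    ∃ π : Fin k → U,
      (∀ i, i ∈ A (π i)) ∧
      (∀ i j, x i = x j ↔ π i = π j) ∧
      (∀ i j, y i = y j ↔ sim.r (π i) (π j)) := by
  obtain ⟨f, hinj, hex⟩ := hmatch
  choose g hg1 hg2 using hex
  have gcong : ∀ (r s : Fin k) (hr : r ∈ Set.range y) (hs : s ∈ Set.range y),
      r = s → g r hr = g s hs := by rintro r s hr hs rfl; rfl
  refine ⟨fun i => g (y i) ⟨i, rfl⟩ i, ?_, ?_, ?_⟩
  · intro i
    exact (hg1 (y i) ⟨i, rfl⟩ i rfl).2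
  · intro i j
    constructor
    · intro hxy
      have hy : y i = y j := hcons i j hxy
      have h := (hg2 (y i) ⟨i, rfl⟩ i j rfl hy.symm).2 hxy
      show g (y i) ⟨i, rfl⟩ i = g (y j) ⟨j, rfl⟩ j
      rw [h, gcong (y i) (y j) ⟨i, rfl⟩ ⟨j, rfl⟩ hy]
    · intro hπ
      have hπ' : g (y i) ⟨i, rfl⟩ i = g (y j) ⟨j, rfl⟩ j := hπ
      by_cases hy : y i = y j
      · apply (hg2 (y i) ⟨i, rfl⟩ i j rfl hy.symm).1
        rw [hπ', gcong (y j) (y i) ⟨j, rfl⟩ ⟨i, rfl⟩ hy.symm]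
      · exfalso
        have h1 := (hg1 (y i) ⟨i, rfl⟩ i rfl).1
        have h2 := (hg1 (y j) ⟨j, rfl⟩ j rfl).1
        exact hy (hinj ⟨i, rfl⟩ ⟨j, rfl⟩ (by rw [← h1, ← h2, hπ']))
  · intro i j
    have h1 := (hg1 (y i) ⟨i, rfl⟩ i rfl).1
    have h2 := (hg1 (y j) ⟨j, rfl⟩ j rfl).1
    constructor
    · intro hy
      exact Quotient.exact (show _ = _ by rw [h1, h2, hy])
    · intro hr
      exact hinj ⟨i, rfl⟩ ⟨j, rfl⟩ (by rw [← h1, ← h2]; exact Quotient.sound hr)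
end

section
/- There exists an authorized partial plan π : T_r → u^∼ with p₌|_{T_r} as its UI-pattern if and only if the second-level bipartite graph G_{T_r u^∼} has a matching covering 𝒮_r. -/
/-- There is an authorized partial plan `π : T_r → u^∼` whose UI-pattern is `p₌|_{T_r}` if and
only if the second-level bipartite graph has a matching covering 𝒮_r: an assignment `g` of a
user in the class `c` to each UI-label occurring in `T`, injective on those labels, with `g l`
authorized for every step of `T` carrying label `l`. -/
theorem stmt_10 {U : Type*} [Fintype U] (k : ℕ) (sim : Setoid U)
    (A : U → Set (Fin k)) (x : Fin k → Fin k)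
    (T : Set (Fin k)) (c : Quotient sim) :
    (∃ π : Fin k → U,
      (∀ i ∈ T, Quotient.mk sim (π i) = c ∧ i ∈ A (π i)) ∧
      (∀ i ∈ T, ∀ j ∈ T, π i = π j ↔ x i = x j)) ↔
    (∃ g : Fin k → U,
      Set.InjOn g (x '' T) ∧
      ∀ l ∈ x '' T, Quotient.mk sim (g l) = c ∧ ∀ i ∈ T, x i = l → i ∈ A (g l)) := by
  classical
  constructor
  · rintro ⟨π, h1, h2⟩
    refine ⟨fun l => if h : l ∈ x '' T then π h.choose else π l, ?_, ?_⟩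
    · intro l hl l' hl' heq
      simp only [dif_pos hl, dif_pos hl'] at heq
      obtain ⟨hi, hxi⟩ := hl.choose_spec
      obtain ⟨hj, hxj⟩ := hl'.choose_spec
      rw [← hxi, ← hxj]
      exact (h2 _ hi _ hj).mp heq
    · intro l hl
      simp only [dif_pos hl]
      obtain ⟨hj, hxj⟩ := hl.choose_spec
      refine ⟨(h1 _ hj).1, fun i hi hxi => ?_⟩
      have : π hl.choose = π i := (h2 _ hj _ hi).mpr (by rw [hxj, hxi])
      rw [this]; exact (h1 _ hi).2
  · rintro ⟨g, hinj, hg⟩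
    refine ⟨fun i => g (x i), fun i hi => ?_, fun i hi j hj => ?_⟩
    · obtain ⟨hc, ha⟩ := hg (x i) ⟨i, hi, rfl⟩
      exact ⟨hc, ha i hi rfl⟩
    · exact ⟨fun h => hinj ⟨i, hi, rfl⟩ ⟨j, hj, rfl⟩ h, fun h => by simp only []; rw [h]⟩
end

section
/- The number of nested partitions of a set S with |S| = k ≥ 2 in r levels is at most (r+1)^{k-1} · k^{k-2}. -/
open Finset
open scoped Classical
namespace NP11
variable {k r : ℕ}

noncomputable def rep (s : Setoid (Fin k)) (a : Fin k) : Fin k :=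
  (Finset.univ.filter fun b => s.r a b).min' ⟨a, by simpa using s.refl a⟩

def Chain (P : Fin r → Setoid (Fin k)) : Prop :=
  ∀ (i : Fin r) (h : i.val + 1 < r) (a b : Fin k),
    (P ⟨i.val + 1, h⟩).r a b → (P i).r a b

lemma rel_mono {P : Fin r → Setoid (Fin k)} (hP : Chain P) {i j : ℕ}
    (hij : i ≤ j) (hj : j < r) {a b : Fin k}
    (h : (P ⟨j, hj⟩).r a b) : (P ⟨i, lt_of_le_of_lt hij hj⟩).r a b := by
  induction j, hij using Nat.le_induction with
  | base => exact h
  | succ n hn ih =>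
      exact ih (Nat.lt_of_succ_lt hj) (hP ⟨n, Nat.lt_of_succ_lt hj⟩ hj a b h)

noncomputable def ta (P : Fin r → Setoid (Fin k)) (a : Fin k) : ℕ :=
  Nat.find (p := fun n => r ≤ n ∨ ∃ h : n < r, rep (P ⟨n, h⟩) a = a) ⟨r, Or.inl le_rfl⟩

lemma ta_le (P : Fin r → Setoid (Fin k)) (a : Fin k) : ta P a ≤ r :=
  Nat.find_le (Or.inl le_rfl)

lemma not_rep_of_lt_ta {P : Fin r → Setoid (Fin k)} {a : Fin k} {n : ℕ}
    (h : n < ta P a) (hn : n < r) : rep (P ⟨n, hn⟩) a ≠ a := fun he =>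
  Nat.find_min _ h (Or.inr ⟨hn, he⟩)

lemma ta_spec (P : Fin r → Setoid (Fin k)) (a : Fin k) :
    r ≤ ta P a ∨ ∃ h : ta P a < r, rep (P ⟨ta P a, h⟩) a = a :=
  Nat.find_spec (p := fun n => r ≤ n ∨ ∃ h : n < r, rep (P ⟨n, h⟩) a = a) ⟨r, Or.inl le_rfl⟩

lemma rep_fixed_mono' {s t : Setoid (Fin k)} (hsub : ∀ x y, t.r x y → s.r x y)
    {a : Fin k} (h : rep s a = a) : rep t a = a := by
  refine le_antisymm (Finset.min'_le _ a (by simpa using t.refl a)) ?_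
  have h1 : s.r a (rep t a) := hsub _ _ (by
    have := Finset.min'_mem (Finset.univ.filter fun b => t.r a b) ⟨a, by simpa using t.refl a⟩
    simpa [rep] using this)
  have : rep s a ≤ rep t a := Finset.min'_le _ _ (by simpa using h1)
  omega

lemma rep_eq_of_ta_le {P : Fin r → Setoid (Fin k)} (hP : Chain P) {a : Fin k}
    {i : Fin r} (h : ta P a ≤ i.val) : rep (P i) a = a := by
  have key : ∀ n, ta P a ≤ n → ∀ hn : n < r, rep (P ⟨n, hn⟩) a = a := by
    intro n hn
    induction n, hn using Nat.le_induction with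
    | base =>
        intro hlt
        rcases ta_spec P a with h' | ⟨h', he⟩
        · omega
        · exact he
    | succ n hn ih =>
        intro hlt
        have hn' : n < r := Nat.lt_of_succ_lt hlt
        exact rep_fixed_mono' (fun x y hxy => hP ⟨n, hn'⟩ hlt x y hxy) (ih hn')
  have := key i.val h i.isLt
  simpa using this

noncomputable def pa (P : Fin r → Setoid (Fin k)) (a : Fin k) : Fin k :=
  if h : 0 < ta P a then
    rep (P ⟨ta P a - 1, Nat.lt_of_lt_of_le (Nat.sub_lt h Nat.one_pos) (ta_le P a)⟩) a
  else a

lemma rep_r' (s : Setoid (Fin k)) (a : Fin k) : s.r a (rep s a) := by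
  have := Finset.min'_mem (Finset.univ.filter fun b => s.r a b) ⟨a, by simpa using s.refl a⟩
  simpa [rep] using this

lemma rep_le' (s : Setoid (Fin k)) (a : Fin k) : rep s a ≤ a :=
  Finset.min'_le _ a (by simpa using s.refl a)

lemma pa_lt {P : Fin r → Setoid (Fin k)} {a : Fin k} (h : 0 < ta P a) : pa P a < a := by
  have hlt : ta P a - 1 < r := Nat.lt_of_lt_of_le (Nat.sub_lt h Nat.one_pos) (ta_le P a)
  have hne : rep (P ⟨ta P a - 1, hlt⟩) a ≠ a := not_rep_of_lt_ta (by omega) hlt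
  have hle : rep (P ⟨ta P a - 1, hlt⟩) a ≤ a := rep_le' _ _
  rw [pa, dif_pos h]
  exact lt_of_le_of_ne hle hne

lemma rep_eq_of_r' {s : Setoid (Fin k)} {a b : Fin k} (h : s.r a b) : rep s a = rep s b := by
  have hset : (Finset.univ.filter fun c => s.r a c) = (Finset.univ.filter fun c => s.r b c) := by
    ext c
    simp only [mem_filter, mem_univ, true_and]
    exact ⟨fun h' => s.trans (s.symm h) h', fun h' => s.trans h h'⟩
  simp only [rep]
  congr 1

lemma r_of_rep_eq' {s : Setoid (Fin k)} {a b : Fin k} (h : rep s a = rep s b) : s.r a b :=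
  s.trans (rep_r' s a) (h ▸ s.symm (rep_r' s b))

/-- the key recovery identity -/
lemma rep_recover {P : Fin r → Setoid (Fin k)} (hP : Chain P) (i : Fin r) (a : Fin k) :
    rep (P i) a = if ta P a ≤ i.val then a else rep (P i) (pa P a) := by
  split
  · next h => exact rep_eq_of_ta_le hP h
  · next h =>
      push_neg at h
      have h0 : 0 < ta P a := by omega
      have hlt : ta P a - 1 < r := Nat.lt_of_lt_of_le (Nat.sub_lt h0 Nat.one_pos) (ta_le P a)
      have h1 : (P ⟨ta P a - 1, hlt⟩).r a (pa P a) := by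
        rw [pa, dif_pos h0]; exact rep_r' _ _
      have h2 : (P i).r a (pa P a) := by
        have := rel_mono hP (i := i.val) (j := ta P a - 1) (by omega) hlt h1
        simpa using this
      exact rep_eq_of_r' h2

lemma rep_ext {P P' : Fin r → Setoid (Fin k)} (hP : Chain P) (hP' : Chain P')
    (hc : ∀ a, ta P a = ta P' a ∧ pa P a = pa P' a) :
    ∀ (a : Fin k) (i : Fin r), rep (P i) a = rep (P' i) a := by
  suffices H : ∀ n : ℕ, ∀ a : Fin k, a.val < n → ∀ i, rep (P i) a = rep (P' i) a from
    fun a => H (a.val + 1) a (Nat.lt_succ_self _)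
  intro n
  induction n with
  | zero => intro a ha; omega
  | succ n IH =>
      intro a ha i
      rw [rep_recover hP, rep_recover hP', (hc a).1]
      split
      · rfl
      · next h =>
          push_neg at h
          have h0 : 0 < ta P' a := by omega
          have hlt : (pa P' a).val < a.val := pa_lt h0
          rw [(hc a).2]
          exact IH (pa P' a) (by omega) i

lemma chain_ext {P P' : Fin r → Setoid (Fin k)} (hP : Chain P) (hP' : Chain P')
    (hc : ∀ a, ta P a = ta P' a ∧ pa P a = pa P' a) : P = P' := by
  funext i
  refine Setoid.ext fun a b => ?_
  constructor
  · intro h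
    exact r_of_rep_eq' (by rw [← rep_ext hP hP' hc a i, ← rep_ext hP hP' hc b i,
        rep_eq_of_r' h])
  · intro h
    exact r_of_rep_eq' (by rw [rep_ext hP hP' hc a i, rep_ext hP hP' hc b i,
        rep_eq_of_r' h])

/-- membership of the code in the allowed set -/
lemma code_mem {P : Fin r → Setoid (Fin k)} (a : Fin k) :
    (ta P a, pa P a) ∈
      insert ((0 : ℕ), a) ((Finset.Icc 1 r) ×ˢ (Finset.univ.filter fun b => b < a)) := by
  by_cases h : 0 < ta P a
  · refine Finset.mem_insert_of_mem ?_
    rw [Finset.mem_product]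
    constructor
    · simp only [Finset.mem_Icc]
      exact ⟨h, ta_le P a⟩
    · simp [pa_lt h]
  · have h0 : ta P a = 0 := by omega
    have : pa P a = a := by rw [pa, dif_neg h]
    simp [h0, this]

lemma fact_le_pow : ∀ m : ℕ, Nat.factorial (m + 1) ≤ (m + 2) ^ m := by
  intro m
  induction m with
  | zero => simp
  | succ n ih =>
      have h1 : Nat.factorial (n + 2) = (n + 2) * Nat.factorial (n + 1) := Nat.factorial_succ (n + 1)
      calc Nat.factorial (n + 2) = (n + 2) * Nat.factorial (n + 1) := h1
        _ ≤ (n + 2) * (n + 2) ^ n := Nat.mul_le_mul_left _ ih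
        _ = (n + 2) ^ (n + 1) := (pow_succ' _ _).symm
        _ ≤ (n + 3) ^ (n + 1) := Nat.pow_le_pow_left (by omega) _

lemma prod_bound (k r : ℕ) (hk : 2 ≤ k) :
    ∏ n ∈ Finset.range k, (1 + r * n) ≤ (r + 1) ^ (k - 1) * k ^ (k - 2) := by
  obtain ⟨m, rfl⟩ : ∃ m, k = m + 2 := ⟨k - 2, by omega⟩
  have hpeel : ∏ n ∈ Finset.range (m + 2), (1 + r * n)
      = ∏ i ∈ Finset.range (m + 1), (1 + r * (i + 1)) := by
    rw [Finset.prod_range_succ']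
    simp
  rw [hpeel]
  have h1 : ∏ i ∈ Finset.range (m + 1), (1 + r * (i + 1))
      ≤ ∏ i ∈ Finset.range (m + 1), ((r + 1) * (i + 1)) := by
    refine Finset.prod_le_prod' fun i _ => ?_
    ring_nf
    omega
  have h2 : ∏ i ∈ Finset.range (m + 1), ((r + 1) * (i + 1))
      = (r + 1) ^ (m + 1) * Nat.factorial (m + 1) := by
    rw [Finset.prod_mul_distrib, Finset.prod_const, Finset.card_range,
      Finset.prod_range_add_one_eq_factorial]
  have h3 : Nat.factorial (m + 1) ≤ (m + 2) ^ m := fact_le_pow m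
  calc ∏ i ∈ Finset.range (m + 1), (1 + r * (i + 1))
      ≤ (r + 1) ^ (m + 1) * Nat.factorial (m + 1) := h1.trans_eq h2
    _ ≤ (r + 1) ^ (m + 1) * (m + 2) ^ m := Nat.mul_le_mul_left _ h3
    _ = (r + 1) ^ (m + 2 - 1) * (m + 2) ^ (m + 2 - 2) := by norm_num

end NP11

/-- The number of nested partitions of a `k`-element set in `r` levels is at most
`(r+1)^(k-1) * k^(k-2)`. Partitions of `Fin k` are identified with setoids on `Fin k`. -/
theorem stmt_11 (k r : ℕ) (hk : 2 ≤ k) (hr : 1 ≤ r) :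
    Set.ncard {P : Fin r → Setoid (Fin k) |
        ∀ (i : Fin r) (h : i.val + 1 < r) (a b : Fin k),
          (P ⟨i.val + 1, h⟩).r a b → (P i).r a b}
      ≤ (r + 1) ^ (k - 1) * k ^ (k - 2) := by
  classical
  set S : Set (Fin r → Setoid (Fin k)) := {P : Fin r → Setoid (Fin k) |
        ∀ (i : Fin r) (h : i.val + 1 < r) (a b : Fin k),
          (P ⟨i.val + 1, h⟩).r a b → (P i).r a b} with hS
  set allowed : Fin k → Finset (ℕ × Fin k) :=
    fun a => insert ((0 : ℕ), a) ((Finset.Icc 1 r) ×ˢ (Finset.univ.filter fun b => b < a))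
    with hallowed
  have hΦinj : Function.Injective (fun (P : S) (a : Fin k) =>
      (⟨(NP11.ta P.1 a, NP11.pa P.1 a), NP11.code_mem a⟩ : {x // x ∈ allowed a})) := by
    intro P Q h
    apply Subtype.ext
    refine NP11.chain_ext P.2 Q.2 fun a => ?_
    have := congrFun h a
    simp only [Subtype.mk.injEq, Prod.mk.injEq] at this
    exact this
  calc S.ncard = Nat.card S := (Nat.card_coe_set_eq S).symm
    _ ≤ Nat.card (∀ a : Fin k, {x // x ∈ allowed a}) :=
        Nat.card_le_card_of_injective _ hΦinj
    _ = ∏ a : Fin k, (allowed a).card := by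
        simp [Nat.card_eq_fintype_card, Fintype.card_pi]
    _ ≤ ∏ a : Fin k, (1 + r * a.val) := by
        refine Finset.prod_le_prod' fun a _ => ?_
        refine (Finset.card_insert_le _ _).trans ?_
        rw [Finset.card_product, Nat.card_Icc]
        have hf : (Finset.univ.filter fun b => b < a) = Finset.Iio a := by
          ext b; simp
        rw [hf, Fin.card_Iio, Nat.add_sub_cancel]
        omega
    _ = ∏ n ∈ Finset.range k, (1 + r * n) := by
        rw [Fin.prod_univ_eq_prod_range (fun n => 1 + r * n) k]
    _ ≤ (r + 1) ^ (k - 1) * k ^ (k - 2) := NP11.prod_bound k r hk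
end

section
/- Suppose the constraint set C consists only of UI constraints C₌ and CI constraints C₋ (for a fixed equivalence relation ∼). Then the workflow W = (S, U, 𝒜, C) is satisfiable if and only if there exists a consistent (UI, CI)-pattern p = (p₌, p₋) such that p is eligible for C (every plan with pattern p satisfies all constraints) and p is realizable (some authorized plan has pattern p). -/
open Classical in
/-- Any injectivity-pattern-preserving pair of maps into a finite type differ by a permutation. -/
lemma exists_perm_comp {α : Type*} [Fintype α] {k : ℕ} (f g : Fin k → α)
    (h : ∀ i j, f i = f j ↔ g i = g j) : ∃ φ : Equiv.Perm α, ∀ i, φ (f i) = g i := by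
  classical
  set s : Set α := Set.range f
  set t : Set α := Set.range g
  let F : s → t := fun a => ⟨g (Classical.choose a.2), Classical.choose a.2, rfl⟩
  have hF : ∀ a : s, (F a : α) = g (Classical.choose a.2) := fun a => rfl
  have hchoose : ∀ a : s, f (Classical.choose a.2) = a := fun a => Classical.choose_spec a.2
  have hFbij : Function.Bijective F := by
    constructor
    · intro a b hab
      apply Subtype.ext
      have : g (Classical.choose a.2) = g (Classical.choose b.2) := congrArg Subtype.val hab
      have := (h _ _).2 this
      rw [hchoose, hchoose] at this
      exact this
    · rintro ⟨_, j, rfl⟩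
      refine ⟨⟨f j, j, rfl⟩, Subtype.ext ?_⟩
      rw [hF]
      exact (h _ _).1 (hchoose ⟨f j, j, rfl⟩)
  let e : s ≃ t := Equiv.ofBijective F hFbij
  have hcard : Fintype.card (↥sᶜ) = Fintype.card (↥tᶜ) := by
    have h1 := Fintype.card_compl_set s
    have h2 := Fintype.card_compl_set t
    have h3 : Fintype.card s = Fintype.card t := Fintype.card_congr e
    omega
  let e' : (↥sᶜ) ≃ (↥tᶜ) := Fintype.equivOfCardEq hcard
  refine ⟨((Equiv.Set.sumCompl s).symm.trans ((e.sumCongr e').trans (Equiv.Set.sumCompl t))), ?_⟩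
  intro i
  have hmem : f i ∈ s := ⟨i, rfl⟩
  simp only [Equiv.trans_apply, Equiv.Set.sumCompl_symm_apply_of_mem hmem,
    Equiv.sumCongr_apply, Sum.map_inl, Equiv.Set.sumCompl_apply_inl]
  show (F ⟨f i, hmem⟩ : α) = g i
  rw [hF]
  exact (h _ _).1 (hchoose ⟨f i, hmem⟩)

/-- Every map into a type with an equivalence relation has a pattern. -/
lemma exists_pattern {α : Type*} {k : ℕ} (f : Fin k → α) (r : α → α → Prop)
    (hr : Equivalence r) : ∃ p : Fin k → Fin k, ∀ i j, p i = p j ↔ r (f i) (f j) := by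
  classical
  have hne : ∀ i : Fin k, (Finset.univ.filter fun j => r (f j) (f i)).Nonempty :=
    fun i => ⟨i, by simp [hr.refl]⟩
  refine ⟨fun i => (Finset.univ.filter fun j => r (f j) (f i)).min' (hne i), fun i j => ?_⟩
  constructor
  · intro hpq
    have hi : r (f ((Finset.univ.filter fun j' => r (f j') (f i)).min' (hne i))) (f i) := by
      have := Finset.min'_mem _ (hne i)
      simpa using this
    have hj : r (f ((Finset.univ.filter fun j' => r (f j') (f j)).min' (hne j))) (f j) := by
      have := Finset.min'_mem _ (hne j)
      simpa using this
    dsimp only at hpq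
    rw [hpq] at hi
    exact hr.trans (hr.symm hi) hj
  · intro hij
    have : (Finset.univ.filter fun j' => r (f j') (f i)) =
        (Finset.univ.filter fun j' => r (f j') (f j)) := by
      ext a
      simp only [Finset.mem_filter, Finset.mem_univ, true_and]
      exact ⟨fun ha => hr.trans ha hij, fun ha => hr.trans ha (hr.symm hij)⟩
    simp [this]

/-- A workflow with only UI constraints `CU` and CI constraints `CC` is satisfiable iff there is
a consistent (UI, CI)-pattern that is eligible and realizable. Constraints are pairs
`⟨T, Θ⟩` of a scope `T ⊆ S` and a set `Θ` of functions `T → U`. -/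
theorem stmt_18 {U : Type*} [Fintype U] (k : ℕ) (sim : Setoid U)
    (A : U → Set (Fin k))
    (CU CC : Set (Σ T : Set (Fin k), Set (T → U)))
    (hCU : ∀ c ∈ CU, ∀ φ : Equiv.Perm U, ∀ θ ∈ c.2, (⇑φ ∘ θ) ∈ c.2)
    (hCC₁ : ∀ c ∈ CC, ∀ θ : c.1 → U,
      (Quotient.mk sim ∘ θ) ∈ (fun θ' : c.1 → U => Quotient.mk sim ∘ θ') '' c.2 → θ ∈ c.2)
    (hCC₂ : ∀ c ∈ CC, ∀ φ : Equiv.Perm (Quotient sim), ∀ θ : c.1 → U,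
      (Quotient.mk sim ∘ θ) ∈ (fun θ' : c.1 → U => Quotient.mk sim ∘ θ') '' c.2 →
      (⇑φ ∘ (Quotient.mk sim ∘ θ)) ∈ (fun θ' : c.1 → U => Quotient.mk sim ∘ θ') '' c.2) :
    (∃ π : Fin k → U,
      (∀ i, i ∈ A (π i)) ∧
      (∀ c ∈ CU ∪ CC, (fun t : c.1 => π t) ∈ c.2)) ↔
    (∃ x y : Fin k → Fin k,
      -- consistency
      (∀ i j, x i = x j → y i = y j) ∧
      -- eligibility: every plan with UI-pattern x satisfies CU
      (∀ π : Fin k → U, (∀ i j, x i = x j ↔ π i = π j) →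
        ∀ c ∈ CU, (fun t : c.1 => π t) ∈ c.2) ∧
      -- eligibility: every plan with CI-pattern y satisfies CC
      (∀ π : Fin k → U, (∀ i j, y i = y j ↔ sim.r (π i) (π j)) →
        ∀ c ∈ CC, (fun t : c.1 => π t) ∈ c.2) ∧
      -- realizability
      (∃ π : Fin k → U,
        (∀ i, i ∈ A (π i)) ∧
        (∀ i j, x i = x j ↔ π i = π j) ∧
        (∀ i j, y i = y j ↔ sim.r (π i) (π j)))) := by
  classical
  constructor
  · rintro ⟨π, hA, hC⟩
    obtain ⟨x, hx⟩ := exists_pattern π Eq ⟨fun _ => rfl, Eq.symm, Eq.trans⟩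
    obtain ⟨y, hy⟩ := exists_pattern π sim.r sim.iseqv
    refine ⟨x, y, ?_, ?_, ?_, π, hA, hx, hy⟩
    · intro i j hxy
      exact (hy i j).2 ((hx i j).1 hxy ▸ sim.refl _)
    · intro π' hx' c hc
      have hpat : ∀ i j, π i = π j ↔ π' i = π' j := fun i j =>
        ((hx i j).symm.trans (hx' i j))
      obtain ⟨φ, hφ⟩ := exists_perm_comp π π' hpat
      have hθ : (fun t : c.1 => π t) ∈ c.2 := hC c (Or.inl hc)
      have := hCU c hc φ _ hθ
      have heq : (⇑φ ∘ fun t : c.1 => π t) = fun t : c.1 => π' t := funext fun t => hφ t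
      rwa [heq] at this
    · intro π' hy' c hc
      haveI : Fintype (Quotient sim) := Fintype.ofFinite _
      have hpat : ∀ i j, (Quotient.mk sim (π i)) = Quotient.mk sim (π j) ↔
          (Quotient.mk sim (π' i)) = Quotient.mk sim (π' j) := by
        intro i j
        rw [Quotient.eq, Quotient.eq]
        exact ((hy i j).symm.trans (hy' i j))
      obtain ⟨φ, hφ⟩ := exists_perm_comp (fun i => Quotient.mk sim (π i))
        (fun i => Quotient.mk sim (π' i)) hpat
      have hθ : (fun t : c.1 => π t) ∈ c.2 := hC c (Or.inr hc)
      have h0 : (Quotient.mk sim ∘ fun t : c.1 => π t) ∈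
          (fun θ' : c.1 → U => Quotient.mk sim ∘ θ') '' c.2 := ⟨_, hθ, rfl⟩
      have h1 := hCC₂ c hc φ _ h0
      have heq : (⇑φ ∘ (Quotient.mk sim ∘ fun t : c.1 => π t)) =
          (Quotient.mk sim ∘ fun t : c.1 => π' t) := funext fun t => hφ t
      rw [heq] at h1
      exact hCC₁ c hc _ h1
  · rintro ⟨x, y, _, hU, hCc, π, hA, hx, hy⟩
    refine ⟨π, hA, fun c hc => ?_⟩
    rcases hc with hc | hc
    · exact hU π hx c hc
    · exact hCc π hy c hc
end

section
/- Let M be a matching in the top-level bipartite graph G_p covering 𝒯, assigning class u_r^∼ to T_r, and for each r let π_r : T_r → u_r^∼ be an authorized partial plan with UI-pattern p₌|_{T_r}. Then the union π = ⋃_r π_r is a well-defined authorized plan S → U, and p₋ is a CI-pattern for π. -/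
/-- Given a matching `f` in the top-level graph covering 𝒯 and, for each CI-label `r`, an
authorized partial plan `plans r` into the class `f r` with UI-pattern `p₌` restricted to `T_r`,
the union `π i = plans (y i) i` is a well-defined authorized plan and `y` is a CI-pattern
for it. -/
theorem stmt_19 {U : Type*} [Fintype U] (k : ℕ) (sim : Setoid U)
    (A : U → Set (Fin k)) (x y : Fin k → Fin k)
    (f : Fin k → Quotient sim)
    (hinj : Set.InjOn f (Set.range y))
    (plans : Fin k → Fin k → U)
    (hplans : ∀ r ∈ Set.range y, ∀ i, y i = r →
      Quotient.mk sim (plans r i) = f r ∧ i ∈ A (plans r i))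
    (hUIpat : ∀ r ∈ Set.range y, ∀ i j, y i = r → y j = r →
      (plans r i = plans r j ↔ x i = x j)) :
    (∀ i, i ∈ A (plans (y i) i)) ∧
    (∀ i j, y i = y j ↔ sim.r (plans (y i) i) (plans (y j) j)) := by
  constructor
  · intro i
    exact (hplans (y i) ⟨i, rfl⟩ i rfl).2
  · intro i j
    have hi := (hplans (y i) ⟨i, rfl⟩ i rfl).1
    have hj := (hplans (y j) ⟨j, rfl⟩ j rfl).1
    constructor
    · intro h
      have : Quotient.mk sim (plans (y i) i) = Quotient.mk sim (plans (y j) j) := by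
        rw [hi, hj, h]
      exact Quotient.eq.mp this
    · intro h
      have : f (y i) = f (y j) := by
        rw [← hi, ← hj]; exact Quotient.sound h
      exact hinj ⟨i, rfl⟩ ⟨j, rfl⟩ this
end
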